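/- arXiv:2503.06158 — 3 statements merged into one kernel-verified Lean document; each statement's English description precedes it below -/
import Mathlib

section
/- Let N ≥ 1, υ ≥ 0, a : Fin N → ℝ, and let ξ : Fin N → ℝ satisfy ξ i ≥ −υ for all i and ∑_i ξ i = 1. Then ∑_i ξ i · a i ≤ (1 + N·υ)·(max_i a i) − υ·∑_i a i. -/
/-- Bound for an affine combination with weights `ξ i ≥ -υ` summing
to one: `∑ ξ i • a i ≤ (1 + N·υ)·max a − υ·∑ a i`. -/
theorem affine_combination_sup_bound
    (N : ℕ) (hN : 0 < N) (υ : ℝ) (hυ : 0 ≤ υ)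
    (a ξ : Fin N → ℝ) (hξ : ∀ i, -υ ≤ ξ i) (hsum : ∑ i, ξ i = 1) :
    ∑ i, ξ i * a i ≤
      (1 + N * υ) * Finset.univ.sup' (Finset.univ_nonempty_iff.mpr ⟨⟨0, hN⟩⟩) a
        - υ * ∑ i, a i := by
  set M := Finset.univ.sup' (Finset.univ_nonempty_iff.mpr ⟨⟨0, hN⟩⟩) a with hM
  have key : ∑ i, (ξ i + υ) * a i ≤ (1 + N * υ) * M := by
    have h1 : ∑ i, (ξ i + υ) * a i ≤ ∑ i, (ξ i + υ) * M := by
      apply Finset.sum_le_sum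
      intro i _
      have hnn : 0 ≤ ξ i + υ := by linarith [hξ i]
      exact mul_le_mul_of_nonneg_left (Finset.le_sup' a (Finset.mem_univ i)) hnn
    have h2 : ∑ i, (ξ i + υ) * M = (1 + N * υ) * M := by
      rw [← Finset.sum_mul, Finset.sum_add_distrib, hsum, Finset.sum_const,
        Finset.card_univ, Fintype.card_fin, nsmul_eq_mul]
    linarith
  have expand : ∑ i, (ξ i + υ) * a i = ∑ i, ξ i * a i + υ * ∑ i, a i := by
    rw [Finset.mul_sum, ← Finset.sum_add_distrib]
    congr 1; ext i; ring
  linarith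
end

section
/- Let E be a real inner product space, N ≥ 1, υ ≥ 0, L ≥ μ ≥ 0, and let R : Fin N → (E → ℝ) be a family of differentiable client risks with gradients g i : E → E, each satisfying for all w₁, w₂ both the L-smoothness inequality R i (w₁) − R i (w₂) ≤ ⟨g i (w₂), w₁ − w₂⟩ + (L/2)‖w₁ − w₂‖² and the μ-convexity inequality R i (w₁) − R i (w₂) ≥ ⟨g i (w₂), w₁ − w₂⟩ + (μ/2)‖w₁ − w₂‖². Let R̄(w) = (1/N)·∑_i R i (w). Then for every w ∈ E and every ξ : Fin N → ℝ with ξ i ≥ −υ for all i and ∑_i ξ i = 1, one has ∑_i ξ i · R i (w) ≤ R̄(w) + (1 + N·υ)·max_{i,j} (R i (0) − R j (0)) + (1 + N·υ)·((L−μ)/2)·‖w‖² + 2·(1 + N·υ)·max_i |⟨g i (w), w⟩|. -/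
open RealInnerProductSpace

/-! Comparing the μ-convexity lower bound of `R i` with the `L`-smoothness upper bound of `R j`,
both taken at `w` and evaluated at the origin, shows that any two client risks differ at `w` by at
most their spread at the origin, plus `2 max_i |⟪g i w, w⟫|`, plus `(L - μ)/2 ‖w‖²`. A weight
vector `ξ` with `ξ i ≥ -υ` and `∑ ξ i = 1` deviates from the uniform one by `ξ i - 1/N ≥ -(υ + 1/N)`,
so measuring every risk from the largest one turns the deviation from `R̄` into at most
`N (υ + 1/N) = 1 + N υ` times that pairwise bound. -/

theorem sub_le_sub_add_inner_add_of_quadratic_bounds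
    {E : Type*} [NormedAddCommGroup E] [InnerProductSpace ℝ E]
    {f h : E → ℝ} {a b v w : E} {μ L : ℝ}
    (hf : f v - f w ≥ ⟪a, v - w⟫ + μ / 2 * ‖v - w‖ ^ 2)
    (hh : h v - h w ≤ ⟪b, v - w⟫ + L / 2 * ‖v - w‖ ^ 2) :
    f w - h w ≤ f v - h v + ⟪a - b, w - v⟫ + (L - μ) / 2 * ‖w - v‖ ^ 2 := by
  rw [← neg_sub w v, inner_neg_right, norm_neg] at hf hh
  rw [inner_sub_left]
  linarith

theorem Finset.sum_mul_le_of_sum_eq_zero {ι : Type*} [Fintype ι] {c x : ι → ℝ} {κ B : ℝ}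
    (hκ : 0 ≤ κ) (hc : ∀ i, -κ ≤ c i) (hsum : ∑ i, c i = 0) (hx : ∀ i j, x i - x j ≤ B) :
    ∑ i, c i * x i ≤ Fintype.card ι * κ * B := by
  rcases isEmpty_or_nonempty ι with hι | hι
  · simp
  obtain ⟨k, hk⟩ := Finite.exists_max x
  -- Measured from its maximum, `x` is nonpositive, so `c i ≥ -κ` bounds each term by `κ B`.
  calc ∑ i, c i * x i = ∑ i, c i * (x i - x k) := by
        simp only [mul_sub, Finset.sum_sub_distrib, ← Finset.sum_mul, hsum, zero_mul, sub_zero]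
    _ ≤ ∑ _i : ι, κ * B := Finset.sum_le_sum fun i _ => by
        nlinarith [mul_nonneg (neg_le_iff_add_nonneg.mp (hc i)) (sub_nonneg.mpr (hk i)),
          mul_nonneg hκ (sub_nonneg.mpr (hx k i))]
    _ = Fintype.card ι * κ * B := by
        rw [Finset.sum_const, Finset.card_univ, nsmul_eq_mul, mul_assoc]

theorem Finset.sum_mul_le_average_add {ι : Type*} [Fintype ι] [Nonempty ι] {ξ x : ι → ℝ}
    {υ B : ℝ} (hυ : 0 ≤ υ) (hξ : ∀ i, -υ ≤ ξ i) (hsum : ∑ i, ξ i = 1)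
    (hx : ∀ i j, x i - x j ≤ B) :
    ∑ i, ξ i * x i ≤ 1 / Fintype.card ι * ∑ i, x i + (1 + Fintype.card ι * υ) * B := by
  set n : ℝ := (Fintype.card ι : ℝ)
  have hn : 0 < n := by simp [n, Fintype.card_pos]
  have hdev := Finset.sum_mul_le_of_sum_eq_zero (c := fun i => ξ i - 1 / n) (x := x)
    (by positivity : 0 ≤ υ + 1 / n) (fun i => by linarith [hξ i])
    (by simp [Finset.sum_sub_distrib, hsum, n, hn.ne']) hx
  have hsplit : ∑ i, ξ i * x i = 1 / n * ∑ i, x i + ∑ i, (ξ i - 1 / n) * x i := by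
    rw [Finset.mul_sum, ← Finset.sum_add_distrib]
    exact Finset.sum_congr rfl fun i _ => by ring
  have hcoef : n * (υ + 1 / n) = 1 + n * υ := by field_simp; ring
  rw [hsplit, ← hcoef]
  linarith

theorem ood_risk_upper_bound_general
    {E : Type*} [NormedAddCommGroup E] [InnerProductSpace ℝ E]
    (N : ℕ) (hN : 0 < N) (υ : ℝ) (hυ : 0 ≤ υ)
    (L μ : ℝ)
    (R : Fin N → E → ℝ) (g : Fin N → E → E)
    (hsmooth : ∀ i w₁ w₂, R i w₁ - R i w₂ ≤ ⟪g i w₂, w₁ - w₂⟫ + L / 2 * ‖w₁ - w₂‖ ^ 2)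
    (hconv : ∀ i w₁ w₂, R i w₁ - R i w₂ ≥ ⟪g i w₂, w₁ - w₂⟫ + μ / 2 * ‖w₁ - w₂‖ ^ 2)
    (w : E) (ξ : Fin N → ℝ) (hξ : ∀ i, -υ ≤ ξ i) (hsum : ∑ i, ξ i = 1) :
    ∑ i, ξ i * R i w ≤
      (1 / N) * ∑ i, R i w
        + (1 + N * υ) *
            ((Finset.univ ×ˢ Finset.univ).sup'
              ⟨(⟨0, hN⟩, ⟨0, hN⟩), Finset.mem_product.mpr ⟨Finset.mem_univ _, Finset.mem_univ _⟩⟩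
              (fun p => R p.1 0 - R p.2 0))
        + (1 + N * υ) * ((L - μ) / 2) * ‖w‖ ^ 2
        + 2 * (1 + N * υ) *
            (Finset.univ.sup' (Finset.univ_nonempty_iff.mpr ⟨⟨0, hN⟩⟩)
              (fun i => |⟪g i w, w⟫|)) := by
  have : Nonempty (Fin N) := ⟨⟨0, hN⟩⟩
  set P := (Finset.univ ×ˢ Finset.univ).sup'
      ⟨(⟨0, hN⟩, ⟨0, hN⟩), Finset.mem_product.mpr ⟨Finset.mem_univ _, Finset.mem_univ _⟩⟩
      (fun p : Fin N × Fin N => R p.1 0 - R p.2 0)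
  set Q := Finset.univ.sup' (Finset.univ_nonempty_iff.mpr ⟨⟨0, hN⟩⟩) (fun i => |⟪g i w, w⟫|)
  have hgap : ∀ i j, R i w - R j w ≤ P + (L - μ) / 2 * ‖w‖ ^ 2 + 2 * Q := by
    intro i j
    have h := sub_le_sub_add_inner_add_of_quadratic_bounds (hconv i 0 w) (hsmooth j 0 w)
    have hP : R i 0 - R j 0 ≤ P :=
      Finset.le_sup' (b := (i, j)) (fun p : Fin N × Fin N => R p.1 0 - R p.2 0)
        (Finset.mem_product.mpr ⟨Finset.mem_univ i, Finset.mem_univ j⟩)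
    have hQi : |⟪g i w, w⟫| ≤ Q := Finset.le_sup' (fun i => |⟪g i w, w⟫|) (Finset.mem_univ i)
    have hQj : |⟪g j w, w⟫| ≤ Q := Finset.le_sup' (fun i => |⟪g i w, w⟫|) (Finset.mem_univ j)
    rw [sub_zero, inner_sub_left] at h
    linarith [le_abs_self ⟪g i w, w⟫, neg_abs_le ⟪g j w, w⟫]
  calc ∑ i, ξ i * R i w
      ≤ 1 / N * ∑ i, R i w + (1 + N * υ) * (P + (L - μ) / 2 * ‖w‖ ^ 2 + 2 * Q) := by
        simpa using Finset.sum_mul_le_average_add hυ hξ hsum hgap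
    _ = _ := by ring

/-- Out-of-distribution risk bound. For any affine combination with
weights `ξ i ≥ -υ` summing to one, the combined client risk is bounded by the
average risk plus terms involving the spread of the risks at the origin, the
smoothness/convexity gap, and the invariant penalty terms. -/
theorem ood_risk_upper_bound
    {E : Type*} [NormedAddCommGroup E] [InnerProductSpace ℝ E] [CompleteSpace E]
    (N : ℕ) (hN : 0 < N) (υ : ℝ) (hυ : 0 ≤ υ)
    (L μ : ℝ) (hμ : 0 ≤ μ) (hLμ : μ ≤ L)
    (R : Fin N → E → ℝ) (g : Fin N → E → E)
    (hgrad : ∀ i w, HasGradientAt (R i) (g i w) w)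
    (hsmooth : ∀ i w₁ w₂, R i w₁ - R i w₂ ≤ ⟪g i w₂, w₁ - w₂⟫ + L / 2 * ‖w₁ - w₂‖ ^ 2)
    (hconv : ∀ i w₁ w₂, R i w₁ - R i w₂ ≥ ⟪g i w₂, w₁ - w₂⟫ + μ / 2 * ‖w₁ - w₂‖ ^ 2)
    (w : E) (ξ : Fin N → ℝ) (hξ : ∀ i, -υ ≤ ξ i) (hsum : ∑ i, ξ i = 1) :
    ∑ i, ξ i * R i w ≤
      (1 / N) * ∑ i, R i w
        + (1 + N * υ) *
            ((Finset.univ ×ˢ Finset.univ).sup'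
              ⟨(⟨0, hN⟩, ⟨0, hN⟩), Finset.mem_product.mpr ⟨Finset.mem_univ _, Finset.mem_univ _⟩⟩
              (fun p => R p.1 0 - R p.2 0))
        + (1 + N * υ) * ((L - μ) / 2) * ‖w‖ ^ 2
        + 2 * (1 + N * υ) *
            (Finset.univ.sup' (Finset.univ_nonempty_iff.mpr ⟨⟨0, hN⟩⟩)
              (fun i => |⟪g i w, w⟫|)) :=
  ood_risk_upper_bound_general N hN υ hυ L μ R g hsmooth hconv w ξ hξ hsum
end

section
/- Let E be a real inner product space, f : E → ℝ differentiable with gradient ∇f, L' ≥ μ' > 0, η > 0, B ≥ 0, φ ≥ 0, N ≥ 1. Let f_i : E → ℝ for i ∈ Fin N be differentiable client losses with weights a_i ≥ 0, ∑ a_i = 1, and f = ∑ a_i f_i. Assume: (i) each f_i (and hence f) satisfies the μ'-convexity inequality f_i(w₁) − f_i(w₂) ≥ ⟨∇f_i(w₂), w₁ − w₂⟩ + (μ'/2)‖w₁ − w₂‖² and the L'-smoothness inequality f_i(w₁) − f_i(w₂) ≤ ⟨∇f_i(w₂), w₁ − w₂⟩ + (L'/2)‖w₁ − w₂‖²; (ii)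 each f_i has a minimizer w*_i with ∇f_i(w*_i) = 0, and f has minimizer w^I with ‖w*_i − w^I‖ ≤ φ for all i; (iii) the iterates w : ℕ → E follow the aggregated gradient step w(t+1) = w(t) − η·∇f(w(t)) with η ≤ 1/L'; (iv) ‖w(t) − w^I‖ ≤ B for all t. Then for every T ≥ 1, writing ŵ(T) = (1/T)·∑_{t=1}^{T} w(t+1), one has f(ŵ(T)) − f(w^I) ≤ B²/(2·η·T) + (2·L'/(μ'·T²))·( L'·B² + (μ' + L')·φ² ). -/
/-!
Averaging the clients' quadratic bounds with the weights `a i` shows that `f` itself is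
`μ'`-strongly convex and `L'`-smooth with gradient `∑ a i • ∇f_i`. For such a function a gradient
step with `η ≤ 1/L'` satisfies `f(w(t+1)) − f(z) ≤ (‖w t − z‖² − ‖w(t+1) − z‖²)/(2η)` for every `z`;
these bounds telescope, and Jensen's inequality transfers them to the averaged iterate, giving
`f(ŵ(T)) − f(w^I) ≤ ‖w 1 − w^I‖²/(2ηT) ≤ B²/(2ηT)`. The heterogeneity term is nonnegative.
-/

open RealInnerProductSpace Finset

section GradientDescent

variable {E : Type*} [NormedAddCommGroup E] [InnerProductSpace ℝ E]

/-- The first-order `L`-smoothness inequality for `f` with gradient field `g`. -/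
def QuadraticUpperBound (f : E → ℝ) (g : E → E) (L : ℝ) : Prop :=
  ∀ x y, f x - f y ≤ ⟪g y, x - y⟫ + L / 2 * ‖x - y‖ ^ 2

/-- The first-order `μ`-strong convexity inequality for `f` with gradient field `g`. -/
def QuadraticLowerBound (f : E → ℝ) (g : E → E) (μ : ℝ) : Prop :=
  ∀ x y, ⟪g y, x - y⟫ + μ / 2 * ‖x - y‖ ^ 2 ≤ f x - f y

section WeightedSum

variable {ι : Type*} {s : Finset ι} {a : ι → ℝ}

lemma sum_mul_inner_add_eq (hsum : ∑ i ∈ s, a i = 1) (g : ι → E) (v : E) (c : ℝ) :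
    ∑ i ∈ s, a i * (⟪g i, v⟫ + c) = ⟪∑ i ∈ s, a i • g i, v⟫ + c := by
  simp only [mul_add, sum_add_distrib, ← sum_mul, hsum, one_mul, sum_inner, real_inner_smul_left]

lemma QuadraticUpperBound.weightedSum (ha : ∀ i ∈ s, 0 ≤ a i) (hsum : ∑ i ∈ s, a i = 1)
    {f : ι → E → ℝ} {g : ι → E → E} {L : ℝ} (hf : ∀ i ∈ s, QuadraticUpperBound (f i) (g i) L) :
    QuadraticUpperBound (fun x ↦ ∑ i ∈ s, a i * f i x) (fun x ↦ ∑ i ∈ s, a i • g i x) L :=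
  fun x y ↦ calc
    ∑ i ∈ s, a i * f i x - ∑ i ∈ s, a i * f i y = ∑ i ∈ s, a i * (f i x - f i y) := by
      simp only [mul_sub, sum_sub_distrib]
    _ ≤ ∑ i ∈ s, a i * (⟪g i y, x - y⟫ + L / 2 * ‖x - y‖ ^ 2) :=
      sum_le_sum fun i hi ↦ mul_le_mul_of_nonneg_left (hf i hi x y) (ha i hi)
    _ = _ := sum_mul_inner_add_eq hsum _ _ _

lemma QuadraticLowerBound.weightedSum (ha : ∀ i ∈ s, 0 ≤ a i) (hsum : ∑ i ∈ s, a i = 1)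
    {f : ι → E → ℝ} {g : ι → E → E} {μ : ℝ} (hf : ∀ i ∈ s, QuadraticLowerBound (f i) (g i) μ) :
    QuadraticLowerBound (fun x ↦ ∑ i ∈ s, a i * f i x) (fun x ↦ ∑ i ∈ s, a i • g i x) μ :=
  fun x y ↦ calc
    ⟪∑ i ∈ s, a i • g i y, x - y⟫ + μ / 2 * ‖x - y‖ ^ 2
        = ∑ i ∈ s, a i * (⟪g i y, x - y⟫ + μ / 2 * ‖x - y‖ ^ 2) :=
      (sum_mul_inner_add_eq hsum _ _ _).symm
    _ ≤ ∑ i ∈ s, a i * (f i x - f i y) :=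
      sum_le_sum fun i hi ↦ mul_le_mul_of_nonneg_left (hf i hi x y) (ha i hi)
    _ = ∑ i ∈ s, a i * f i x - ∑ i ∈ s, a i * f i y := by
      simp only [mul_sub, sum_sub_distrib]

lemma HasGradientAt.weightedSum [CompleteSpace E] {f : ι → E → ℝ} {g : ι → E} {x : E}
    (hf : ∀ i ∈ s, HasGradientAt (f i) (g i) x) :
    HasGradientAt (fun y ↦ ∑ i ∈ s, a i * f i y) (∑ i ∈ s, a i • g i) x := by
  rw [hasGradientAt_iff_hasFDerivAt, map_sum]
  simp only [map_smul]
  exact HasFDerivAt.fun_sum fun i hi ↦ ((hf i hi).hasFDerivAt).const_mul (a i)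

end WeightedSum

lemma QuadraticLowerBound.convexOn {f : E → ℝ} {g : E → E} {μ : ℝ}
    (hf : QuadraticLowerBound f g μ) (hμ : 0 ≤ μ) : ConvexOn ℝ Set.univ f := by
  refine ⟨convex_univ, fun x _ y _ p q hp hq hpq ↦ ?_⟩
  set z := p • x + q • y with hz
  have hcancel : p * ⟪g z, x - z⟫ + q * ⟪g z, y - z⟫ = 0 := by
    rw [← real_inner_smul_right, ← real_inner_smul_right, ← inner_add_right]
    convert inner_zero_right (g z) using 2
    rw [smul_sub, smul_sub, sub_add_sub_comm, ← hz, ← add_smul, hpq, one_smul, sub_self]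
  have hx := mul_le_mul_of_nonneg_left (hf x z) hp
  have hy := mul_le_mul_of_nonneg_left (hf y z) hq
  have hsplit : p * f z + q * f z = f z := by rw [← add_mul, hpq, one_mul]
  simp only [smul_eq_mul]
  linarith [mul_nonneg hp (mul_nonneg hμ (sq_nonneg ‖x - z‖)),
    mul_nonneg hq (mul_nonneg hμ (sq_nonneg ‖y - z‖))]

lemma norm_sub_smul_sub_sq (x z g : E) (η : ℝ) :
    ‖x - η • g - z‖ ^ 2 = ‖x - z‖ ^ 2 - 2 * η * ⟪g, x - z⟫ + η ^ 2 * ‖g‖ ^ 2 := by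
  rw [sub_right_comm, norm_sub_sq_real, real_inner_smul_right, norm_smul, real_inner_comm,
    Real.norm_eq_abs, mul_pow, sq_abs]
  ring

lemma QuadraticUpperBound.sub_le_of_gradient_step {f : E → ℝ} {g : E → E} {L μ η : ℝ}
    (hupper : QuadraticUpperBound f g L) (hlower : QuadraticLowerBound f g μ) (hμ : 0 ≤ μ)
    (hη : 0 < η) (hηL : η * L ≤ 1) (x z : E) :
    f (x - η • g x) - f z ≤ (‖x - z‖ ^ 2 - ‖x - η • g x - z‖ ^ 2) / (2 * η) := by
  have hdescent : f (x - η • g x) - f x ≤ -(η / 2) * ‖g x‖ ^ 2 := by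
    have h := hupper (x - η • g x) x
    rw [sub_sub_cancel_left, inner_neg_right, norm_neg, real_inner_smul_right,
      real_inner_self_eq_norm_sq, norm_smul, Real.norm_eq_abs, mul_pow, sq_abs] at h
    nlinarith [mul_nonneg (mul_nonneg hη.le (sub_nonneg.2 hηL)) (sq_nonneg ‖g x‖)]
  have htangent : ⟪g x, z - x⟫ ≤ f z - f x := by
    nlinarith [hlower z x, mul_nonneg hμ (sq_nonneg ‖z - x‖)]
  rw [← neg_sub x z, inner_neg_right] at htangent
  rw [norm_sub_smul_sub_sq, le_div_iff₀ (by positivity)]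
  nlinarith

lemma QuadraticUpperBound.average_iterate_sub_le {f : E → ℝ} {g : E → E} {L μ η : ℝ}
    (hupper : QuadraticUpperBound f g L) (hlower : QuadraticLowerBound f g μ) (hμ : 0 ≤ μ)
    (hη : 0 < η) (hηL : η * L ≤ 1) {w : ℕ → E} (hupd : ∀ t, w (t + 1) = w t - η • g (w t))
    (z : E) {T : ℕ} (hT : 1 ≤ T) :
    f ((1 / (T : ℝ)) • ∑ t ∈ Icc 1 T, w (t + 1)) - f z ≤ ‖w 1 - z‖ ^ 2 / (2 * η * T) := by
  have hTpos : (0 : ℝ) < T := by exact_mod_cast hT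
  have hcard : (#(Icc 1 T) : ℝ) = T := by simp
  have hjensen : f ((1 / (T : ℝ)) • ∑ t ∈ Icc 1 T, w (t + 1))
      ≤ ∑ t ∈ Icc 1 T, (1 / (T : ℝ)) * f (w (t + 1)) := by
    rw [smul_sum]
    exact (hlower.convexOn hμ).map_sum_le (fun _ _ ↦ by positivity)
      (by rw [sum_const, nsmul_eq_mul, hcard]; field_simp) (fun _ _ ↦ Set.mem_univ _)
  have htelescope : ∑ t ∈ Icc 1 T, (f (w (t + 1)) - f z) ≤ ‖w 1 - z‖ ^ 2 / (2 * η) := calc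
    ∑ t ∈ Icc 1 T, (f (w (t + 1)) - f z)
        ≤ ∑ t ∈ Icc 1 T, (‖w t - z‖ ^ 2 - ‖w (t + 1) - z‖ ^ 2) / (2 * η) :=
      sum_le_sum fun t _ ↦ by rw [hupd]; exact hupper.sub_le_of_gradient_step hlower hμ hη hηL _ _
    _ = (‖w 1 - z‖ ^ 2 - ‖w (T + 1) - z‖ ^ 2) / (2 * η) := by
      have h := sum_Icc_sub hT fun t ↦ -‖w t - z‖ ^ 2
      simp only [neg_sub_neg] at h
      rw [← sum_div, h]
    _ ≤ ‖w 1 - z‖ ^ 2 / (2 * η) := by gcongr; exact sub_le_self _ (sq_nonneg _)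
  rw [sum_sub_distrib, sum_const, nsmul_eq_mul, hcard] at htelescope
  rw [← mul_sum, one_div_mul_eq_div, le_div_iff₀' hTpos] at hjensen
  rw [← div_div, le_div_iff₀ hTpos]
  linarith

end GradientDescent

theorem fedipg_convergence_general
    {E : Type*} [NormedAddCommGroup E] [InnerProductSpace ℝ E] [CompleteSpace E]
    (N : ℕ)
    (L' μ' η B φ : ℝ) (hμ' : 0 < μ') (hL' : μ' ≤ L') (hη : 0 < η) (hηL : η ≤ 1 / L')
    (a : Fin N → ℝ) (ha : ∀ i, 0 ≤ a i) (hasum : ∑ i, a i = 1)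
    (fi : Fin N → E → ℝ) (gi : Fin N → E → E)
    (hgi : ∀ i w, HasGradientAt (fi i) (gi i w) w)
    (f : E → ℝ) (hfdef : ∀ w, f w = ∑ i, a i * fi i w)
    (gf : E → E) (hgf : ∀ w, HasGradientAt f (gf w) w)
    (hconv : ∀ i w₁ w₂,
      fi i w₁ - fi i w₂ ≥ ⟪gi i w₂, w₁ - w₂⟫ + μ' / 2 * ‖w₁ - w₂‖ ^ 2)
    (hsmooth : ∀ i w₁ w₂,
      fi i w₁ - fi i w₂ ≤ ⟪gi i w₂, w₁ - w₂⟫ + L' / 2 * ‖w₁ - w₂‖ ^ 2)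
    (wI : E)
    (w : ℕ → E) (hupd : ∀ t, w (t + 1) = w t - η • gf (w t))
    (hcompact : ∀ t, ‖w t - wI‖ ≤ B)
    (T : ℕ) (hT : 1 ≤ T) :
    f ((1 / (T : ℝ)) • ∑ t ∈ Finset.Icc 1 T, w (t + 1)) - f wI ≤
      B ^ 2 / (2 * η * T) + 2 * L' / (μ' * T ^ 2) * (L' * B ^ 2 + (μ' + L') * φ ^ 2) := by
  have hL'pos : 0 < L' := hμ'.trans_le hL'
  have hηL' : η * L' ≤ 1 := by rwa [le_div_iff₀ hL'pos] at hηL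
  have hf : f = fun x ↦ ∑ i, a i * fi i x := funext hfdef
  have hgf_eq : gf = fun x ↦ ∑ i, a i • gi i x := funext fun x ↦
    (hgf x).unique (hf ▸ HasGradientAt.weightedSum fun i _ ↦ hgi i x)
  have hupper : QuadraticUpperBound f gf L' :=
    hf ▸ hgf_eq ▸ QuadraticUpperBound.weightedSum (fun i _ ↦ ha i) hasum fun i _ ↦ hsmooth i
  have hlower : QuadraticLowerBound f gf μ' :=
    hf ▸ hgf_eq ▸ QuadraticLowerBound.weightedSum (fun i _ ↦ ha i) hasum fun i _ ↦ hconv i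
  have hrate := hupper.average_iterate_sub_le hlower hμ'.le hη hηL' hupd wI hT
  have hstart : ‖w 1 - wI‖ ^ 2 / (2 * η * T) ≤ B ^ 2 / (2 * η * T) := by
    gcongr; exact hcompact 1
  have hheterogeneity : 0 ≤ 2 * L' / (μ' * T ^ 2) * (L' * B ^ 2 + (μ' + L') * φ ^ 2) := by
    positivity
  linarith

/-- Convergence of FedIPG. With μ'-convex, L'-smooth client losses,
bounded heterogeneity `‖w*_i − w^I‖ ≤ φ`, compact iterates `‖w(t) − w^I‖ ≤ B`, and
aggregated gradient steps `w(t+1) = w(t) − η∇f(w(t))`, the running average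
`ŵ(T) = (1/T)∑_{t=1}^T w(t+1)` satisfies
`f(ŵ(T)) − f(w^I) ≤ B²/(2ηT) + (2L'/(μ'T²))(L'B² + (μ'+L')φ²)`. -/
theorem fedipg_convergence
    {E : Type*} [NormedAddCommGroup E] [InnerProductSpace ℝ E] [CompleteSpace E]
    (N : ℕ) (hN : 0 < N)
    (L' μ' η B φ : ℝ) (hμ' : 0 < μ') (hL' : μ' ≤ L') (hη : 0 < η) (hηL : η ≤ 1 / L')
    (hB : 0 ≤ B) (hφ : 0 ≤ φ)
    (a : Fin N → ℝ) (ha : ∀ i, 0 ≤ a i) (hasum : ∑ i, a i = 1)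
    (fi : Fin N → E → ℝ) (gi : Fin N → E → E)
    (hgi : ∀ i w, HasGradientAt (fi i) (gi i w) w)
    (f : E → ℝ) (hfdef : ∀ w, f w = ∑ i, a i * fi i w)
    (gf : E → E) (hgf : ∀ w, HasGradientAt f (gf w) w)
    (hconv : ∀ i w₁ w₂,
      fi i w₁ - fi i w₂ ≥ ⟪gi i w₂, w₁ - w₂⟫ + μ' / 2 * ‖w₁ - w₂‖ ^ 2)
    (hsmooth : ∀ i w₁ w₂,
      fi i w₁ - fi i w₂ ≤ ⟪gi i w₂, w₁ - w₂⟫ + L' / 2 * ‖w₁ - w₂‖ ^ 2)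
    (wstar : Fin N → E) (hwstar : ∀ i, gi i (wstar i) = 0)
    (hwstarmin : ∀ i w, fi i (wstar i) ≤ fi i w)
    (wI : E) (hwI : ∀ w, f wI ≤ f w)
    (hhetero : ∀ i, ‖wstar i - wI‖ ≤ φ)
    (w : ℕ → E) (hupd : ∀ t, w (t + 1) = w t - η • gf (w t))
    (hcompact : ∀ t, ‖w t - wI‖ ≤ B)
    (T : ℕ) (hT : 1 ≤ T) :
    f ((1 / (T : ℝ)) • ∑ t ∈ Finset.Icc 1 T, w (t + 1)) - f wI ≤
      B ^ 2 / (2 * η * T) + 2 * L' / (μ' * T ^ 2) * (L' * B ^ 2 + (μ' + L') * φ ^ 2) :=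
  fedipg_convergence_general N L' μ' η B φ hμ' hL' hη hηL a ha hasum fi gi hgi f hfdef gf hgf hconv
    hsmooth wI w hupd hcompact T hT
end
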